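/- Let F : ℝⁿ → ℝ be convex and differentiable, χ : ℝⁿ → ℝ convex, C ⊆ ℝⁿ a convex set, and H a symmetric positive definite n×n real matrix. Let u, u* ∈ ℝⁿ, and suppose G is a symmetric n×n matrix with ∇F(u) − ∇F(u*) = G(u − u*) and a xᵀ H x ≤ xᵀ G x ≤ b xᵀ H x for all x ∈ ℝⁿ, where 0 < a ≤ b. Assume u* minimizes F + χ over C, set t = 2/(a + b), and let u⁺ minimize z ↦ (1/(2t))‖z − (u − t H⁻¹ ∇F(u))‖²_H + χ(z) over C. Then the proximal quasi-Newton step contracts linearly in the H-norm: ‖u⁺ − u*‖_H ≤ ((b − a)/(a + b)) ‖u − u*‖_H; equivalently, with κ = b/a, the contraction factor is |1 − κ|/(1 + κ). -/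

import Mathlib

open Matrix

/-- The squared `H`-norm `‖x‖²_H = xᵀ H x` on Euclidean space. -/
noncomputable def hNormSq {n : ℕ} (H : Matrix (Fin n) (Fin n) ℝ)
    (x : EuclideanSpace ℝ (Fin n)) : ℝ :=
  inner ℝ x (Matrix.toEuclideanLin H x)

/-- The `H`-norm `‖x‖_H = (xᵀ H x)^{1/2}` on Euclidean space. -/
noncomputable def hNorm {n : ℕ} (H : Matrix (Fin n) (Fin n) ℝ)
    (x : EuclideanSpace ℝ (Fin n)) : ℝ :=
  Real.sqrt (hNormSq H x)

/-!
The optimality conditions of `u*` for `F + χ` and of `u⁺` for the proximal subproblem, each tested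
at the other point, cancel `χ` and leave `‖u⁺ - u*‖²_H ≤ ⟪u⁺ - u*, (H - tG)(u - u*)⟫`. Because
`a H ≤ G ≤ b H`, the quadratic form of `H - tG` is at most `ρ = (b - a)/(a + b)` times that of `H`
in absolute value, so by polarization `⟪x, (H - tG) y⟫ ≤ ρ ‖x‖_H ‖y‖_H`, and dividing by
`‖u⁺ - u*‖_H` gives the contraction.
-/

open Set RealInnerProductSpace

theorem abs_sub_two_div_add_mul_le {a b q g : ℝ} (hab : 0 < a + b) (hlow : a * q ≤ g)
    (hhigh : g ≤ b * q) : |q - 2 / (a + b) * g| ≤ (b - a) / (a + b) * q := by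
  rw [abs_le]
  constructor <;> field_simp <;> linarith

theorem IsMinOn.hasLineDerivAt_add_sub_nonneg {E : Type*} [NormedAddCommGroup E]
    [NormedSpace ℝ E] {f χ : E → ℝ} {C : Set E} {x z : E} {f' : ℝ}
    (hmin : IsMinOn (fun y => f y + χ y) C x) (hC : Convex ℝ C) (hχ : ConvexOn ℝ C χ)
    (hx : x ∈ C) (hz : z ∈ C) (hf : HasLineDerivAt ℝ f f' x (z - x)) :
    0 ≤ f' + (χ z - χ x) := by
  set g : ℝ → ℝ := fun l => f (x + l • (z - x)) + l * (χ z - χ x)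
  have hg : HasDerivAt g (f' + (χ z - χ x)) 0 := hf.add (hasDerivAt_mul_const _)
  -- convexity bounds `χ` on the segment by its chord, so `f + chord` is minimal at `x`
  have hg_min : IsMinOn g (Icc 0 1) 0 := by
    intro l hl
    have hchord := hχ.2 hx hz (sub_nonneg.2 hl.2) hl.1 (sub_add_cancel 1 l)
    rw [show (1 - l) • x + l • z = x + l • (z - x) by module, smul_eq_mul, smul_eq_mul] at hchord
    have := isMinOn_iff.1 hmin _ (hC.add_smul_sub_mem hx hz hl)
    simp only [g, zero_smul, add_zero, zero_mul, mem_ofPred_eq]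
    linarith
  have h1 : (1 : ℝ) ∈ posTangentConeAt (Icc 0 1) 0 :=
    mem_posTangentConeAt_of_segment_subset (by simp [segment_eq_Icc])
  simpa using hg_min.localize.hasFDerivWithinAt_nonneg hg.hasFDerivAt.hasFDerivWithinAt h1

namespace LinearMap.IsSymmetric

variable {E : Type*} [NormedAddCommGroup E] [InnerProductSpace ℝ E] {T S : E →ₗ[ℝ] E}

theorem hasLineDerivAt_inner_sub_map_sub (hT : T.IsSymmetric) (w x v : E) :
    HasLineDerivAt ℝ (fun z => ⟪z - w, T (z - w)⟫) (2 * ⟪x - w, T v⟫) x v := by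
  have hline : HasDerivAt (fun l : ℝ => x - w + l • v) v 0 := by
    simpa using ((hasDerivAt_id (0 : ℝ)).smul_const v).const_add (x - w)
  have hTline : HasDerivAt (fun l : ℝ => T (x - w + l • v)) (T v) 0 := by
    simpa using ((hasDerivAt_id (0 : ℝ)).smul_const (T v)).const_add (T (x - w))
  have := hline.inner ℝ hTline
  rw [zero_smul, add_zero, ← hT v, real_inner_comm (x - w) (T v)] at this
  unfold HasLineDerivAt
  simpa only [add_sub_right_comm, two_mul] using this

theorem inner_map_le_of_abs_inner_map_self_le (hS : S.IsSymmetric) {ρ : ℝ}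
    (h : ∀ x, |⟪x, S x⟫| ≤ ρ * ⟪x, T x⟫) (x y : E) :
    ⟪x, S y⟫ ≤ ρ / 2 * (⟪x, T x⟫ + ⟪y, T y⟫) := by
  have hpolar : ⟪x + y, S (x + y)⟫ - ⟪x - y, S (x - y)⟫ = 4 * ⟪x, S y⟫ := by
    simp only [map_add, map_sub, inner_add_left, inner_add_right, inner_sub_left,
      inner_sub_right, ← hS y x, real_inner_comm (S y)]
    ring
  have hparallelogram : ⟪x + y, T (x + y)⟫ + ⟪x - y, T (x - y)⟫ = 2 * ⟪x, T x⟫ + 2 * ⟪y, T y⟫ := by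
    simp only [map_add, map_sub, inner_add_left, inner_add_right, inner_sub_left,
      inner_sub_right]
    ring
  have h₁ := (abs_le.1 (h (x + y))).2
  have h₂ := (abs_le.1 (h (x - y))).1
  linear_combination (h₁ + h₂ - hpolar + ρ * hparallelogram) / 4

theorem inner_map_le_mul_sqrt_mul_sqrt (hS : S.IsSymmetric) (hTpos : ∀ x ≠ 0, 0 < ⟪x, T x⟫)
    {ρ : ℝ} (h : ∀ x, |⟪x, S x⟫| ≤ ρ * ⟪x, T x⟫) (x y : E) :
    ⟪x, S y⟫ ≤ ρ * √⟪x, T x⟫ * √⟪y, T y⟫ := by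
  rcases eq_or_ne x 0 with rfl | hx
  · simp
  rcases eq_or_ne y 0 with rfl | hy
  · simp
  have hA := hTpos x hx
  have hB := hTpos y hy
  -- rescaled to equal `T`-size, `x` and `y` make the AM-GM bound above tight
  have := inner_map_le_of_abs_inner_map_self_le hS h (√⟪y, T y⟫ • x) (√⟪x, T x⟫ • y)
  simp only [map_smul, real_inner_smul_left, real_inner_smul_right, ← mul_assoc,
    Real.mul_self_sqrt hA.le, Real.mul_self_sqrt hB.le] at this
  refine le_of_mul_le_mul_left ?_ (by positivity : 0 < √⟪x, T x⟫ * √⟪y, T y⟫)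
  calc √⟪x, T x⟫ * √⟪y, T y⟫ * ⟪x, S y⟫
    _ ≤ ρ / 2 * (⟪y, T y⟫ * ⟪x, T x⟫ + ⟪x, T x⟫ * ⟪y, T y⟫) := this
    _ = ρ * ((√⟪x, T x⟫ * √⟪x, T x⟫) * (√⟪y, T y⟫ * √⟪y, T y⟫)) := by
      rw [Real.mul_self_sqrt hA.le, Real.mul_self_sqrt hB.le]; ring
    _ = √⟪x, T x⟫ * √⟪y, T y⟫ * (ρ * √⟪x, T x⟫ * √⟪y, T y⟫) := by ring

theorem sqrt_inner_map_self_le_mul_sqrt (hS : S.IsSymmetric) (hTpos : ∀ x ≠ 0, 0 < ⟪x, T x⟫)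
    {ρ : ℝ} (hρ : 0 ≤ ρ) (h : ∀ x, |⟪x, S x⟫| ≤ ρ * ⟪x, T x⟫) {x y : E}
    (hxy : ⟪x, T x⟫ ≤ ⟪x, S y⟫) : √⟪x, T x⟫ ≤ ρ * √⟪y, T y⟫ := by
  have hx : 0 ≤ ⟪x, T x⟫ := by
    rcases eq_or_ne x 0 with rfl | hx
    · simp
    · exact (hTpos x hx).le
  have := hxy.trans (inner_map_le_mul_sqrt_mul_sqrt hS hTpos h x y)
  nlinarith [Real.mul_self_sqrt hx, Real.sqrt_nonneg ⟪x, T x⟫,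
    mul_nonneg hρ (Real.sqrt_nonneg ⟪y, T y⟫)]

end LinearMap.IsSymmetric

theorem inner_map_self_le_of_isMinOn_prox {E : Type*} [NormedAddCommGroup E]
    [InnerProductSpace ℝ E] [CompleteSpace E] {T : E →ₗ[ℝ] E} (hT : T.IsSymmetric)
    {F χ : E → ℝ} {C : Set E} (hC : Convex ℝ C) (hχ : ConvexOn ℝ C χ) {t : ℝ} (ht : 0 < t)
    {u w g xstar p : E} (hw : T (u - w) = t • g)
    (hF : DifferentiableAt ℝ F xstar) (hxstar : IsMinOn (fun z => F z + χ z) C xstar)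
    (hxstarC : xstar ∈ C)
    (hp : IsMinOn (fun z => 1 / (2 * t) * ⟪z - w, T (z - w)⟫ + χ z) C p) (hpC : p ∈ C) :
    ⟪p - xstar, T (p - xstar)⟫ ≤ ⟪p - xstar, T (u - xstar) - t • (g - gradient F xstar)⟫ := by
  have hprox := hp.hasLineDerivAt_add_sub_nonneg hC hχ hpC hxstarC
    ((hT.hasLineDerivAt_inner_sub_map_sub w p (xstar - p)).const_mul (1 / (2 * t)))
  have hopt := hxstar.hasLineDerivAt_add_sub_nonneg hC hχ hxstarC hpC
    (hF.hasGradientAt.hasFDerivAt.hasLineDerivAt (p - xstar))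
  rw [InnerProductSpace.toDual_apply_apply] at hopt
  have hsplit : ⟪p - w, T (xstar - p)⟫ =
      ⟪p - xstar, T (u - xstar)⟫ - t * ⟪p - xstar, g⟫ - ⟪p - xstar, T (p - xstar)⟫ := by
    rw [real_inner_comm (T (p - xstar)) (p - xstar), real_inner_comm (T (u - xstar)) (p - xstar),
      real_inner_comm g (p - xstar), ← hT, show xstar - p = -(p - xstar) by abel,
      show p - w = (p - xstar) - (u - xstar) + (u - w) by abel, map_add, map_sub, hw,
      inner_neg_right]
    simp only [inner_add_left, inner_sub_left, real_inner_smul_left]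
    ring
  have hscale : t * (1 / (2 * t) * (2 * ⟪p - w, T (xstar - p)⟫) + (χ xstar - χ p)) =
      ⟪p - w, T (xstar - p)⟫ + t * (χ xstar - χ p) := by
    field_simp
  have h₁ := mul_nonneg ht.le hprox
  have h₂ := mul_nonneg ht.le hopt
  rw [hscale, hsplit] at h₁
  rw [inner_sub_right, real_inner_smul_right, inner_sub_right,
    real_inner_comm (gradient F xstar)]
  linear_combination h₁ + h₂

theorem prox_quasi_newton_linear_contraction_general (n : ℕ)
    (F : EuclideanSpace ℝ (Fin n) → ℝ)
    (hFdiff : Differentiable ℝ F)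
    (χ : EuclideanSpace ℝ (Fin n) → ℝ) (hχ : ConvexOn ℝ Set.univ χ)
    (C : Set (EuclideanSpace ℝ (Fin n))) (hC : Convex ℝ C)
    (H : Matrix (Fin n) (Fin n) ℝ) (hH : H.PosDef)
    (u ustar : EuclideanSpace ℝ (Fin n))
    (G : Matrix (Fin n) (Fin n) ℝ) (hGsymm : G.IsSymm)
    (hGrad : gradient F u - gradient F ustar = Matrix.toEuclideanLin G (u - ustar))
    (a b : ℝ) (ha : 0 < a) (hab : a ≤ b)
    (hlow : ∀ x : EuclideanSpace ℝ (Fin n), a * hNormSq H x ≤ hNormSq G x)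
    (hhigh : ∀ x : EuclideanSpace ℝ (Fin n), hNormSq G x ≤ b * hNormSq H x)
    (hustarC : ustar ∈ C)
    (hustar : ∀ z ∈ C, F ustar + χ ustar ≤ F z + χ z)
    (uplus : EuclideanSpace ℝ (Fin n)) (huplusC : uplus ∈ C)
    (huplus : ∀ z ∈ C,
      (1 / (2 * (2 / (a + b)))) * hNormSq H
          (uplus - (u - (2 / (a + b)) • Matrix.toEuclideanLin H⁻¹ (gradient F u))) +
          χ uplus ≤
        (1 / (2 * (2 / (a + b)))) * hNormSq H
          (z - (u - (2 / (a + b)) • Matrix.toEuclideanLin H⁻¹ (gradient F u))) + χ z) :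
    hNorm H (uplus - ustar) ≤ (b - a) / (a + b) * hNorm H (u - ustar) := by
  set t := 2 / (a + b)
  set T := toEuclideanLin H
  set S := T - t • toEuclideanLin G
  have hT : T.IsSymmetric := isSymmetric_toEuclideanLin_iff.mpr hH.isHermitian
  have hS : S.IsSymmetric :=
    hT.sub ((isSymmetric_toEuclideanLin_iff.mpr hGsymm).smul (conj_trivial t))
  have hTpos (x) (hx : x ≠ 0) : 0 < ⟪x, T x⟫ := by
    simpa [T, EuclideanSpace.inner_eq_star_dotProduct, dotProduct_comm]
      using hH.dotProduct_mulVec_pos (x := x.ofLp) (by simpa using hx)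
  have hSbound (x) : |⟪x, S x⟫| ≤ (b - a) / (a + b) * ⟪x, T x⟫ := by
    simp only [S, LinearMap.sub_apply, LinearMap.smul_apply, inner_sub_right,
      real_inner_smul_right]
    exact abs_sub_two_div_add_mul_le (by linarith) (hlow x) (hhigh x)
  have hTinv : T (u - (u - t • toEuclideanLin H⁻¹ (gradient F u))) = t • gradient F u := by
    ext i
    simp [T, mulVec_mulVec, mul_nonsing_inv _ hH.det_pos.ne'.isUnit]
  have hstep := inner_map_self_le_of_isMinOn_prox hT hC (hχ.subset (subset_univ C) hC)
    (div_pos two_pos (by linarith)) hTinv (hFdiff ustar) hustar hustarC huplus huplusC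
  rw [hGrad] at hstep
  exact hS.sqrt_inner_map_self_le_mul_sqrt hTpos (div_nonneg (by linarith) (by linarith))
    hSbound hstep

/-- Linear contraction of the proximal quasi-Newton step. Let `F` be convex and
differentiable, `χ` convex, `C` convex, `H` symmetric positive definite. Suppose `G` is
symmetric with `∇F(u) − ∇F(u*) = G(u − u*)` and `a xᵀHx ≤ xᵀGx ≤ b xᵀHx` for all `x`,
`0 < a ≤ b`. If `u*` minimizes `F + χ` over `C`, `t = 2/(a+b)`, and `u⁺` minimizes
`z ↦ (1/(2t))‖z − (u − t H⁻¹ ∇F(u))‖²_H + χ(z)` over `C`, then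
`‖u⁺ − u*‖_H ≤ ((b − a)/(a + b)) ‖u − u*‖_H`. -/
theorem prox_quasi_newton_linear_contraction (n : ℕ)
    (F : EuclideanSpace ℝ (Fin n) → ℝ)
    (hF : ConvexOn ℝ Set.univ F) (hFdiff : Differentiable ℝ F)
    (χ : EuclideanSpace ℝ (Fin n) → ℝ) (hχ : ConvexOn ℝ Set.univ χ)
    (C : Set (EuclideanSpace ℝ (Fin n))) (hC : Convex ℝ C)
    (H : Matrix (Fin n) (Fin n) ℝ) (hH : H.PosDef)
    (u ustar : EuclideanSpace ℝ (Fin n))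
    (G : Matrix (Fin n) (Fin n) ℝ) (hGsymm : G.IsSymm)
    (hGrad : gradient F u - gradient F ustar = Matrix.toEuclideanLin G (u - ustar))
    (a b : ℝ) (ha : 0 < a) (hab : a ≤ b)
    (hlow : ∀ x : EuclideanSpace ℝ (Fin n), a * hNormSq H x ≤ hNormSq G x)
    (hhigh : ∀ x : EuclideanSpace ℝ (Fin n), hNormSq G x ≤ b * hNormSq H x)
    (hustarC : ustar ∈ C)
    (hustar : ∀ z ∈ C, F ustar + χ ustar ≤ F z + χ z)
    (uplus : EuclideanSpace ℝ (Fin n)) (huplusC : uplus ∈ C)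
    (huplus : ∀ z ∈ C,
      (1 / (2 * (2 / (a + b)))) * hNormSq H
          (uplus - (u - (2 / (a + b)) • Matrix.toEuclideanLin H⁻¹ (gradient F u))) +
          χ uplus ≤
        (1 / (2 * (2 / (a + b)))) * hNormSq H
          (z - (u - (2 / (a + b)) • Matrix.toEuclideanLin H⁻¹ (gradient F u))) + χ z) :
    hNorm H (uplus - ustar) ≤ (b - a) / (a + b) * hNorm H (u - ustar) :=
  prox_quasi_newton_linear_contraction_general n F hFdiff χ hχ C hC H hH u ustar G hGsymm hGrad a b
    ha hab hlow hhigh hustarC hustar uplus huplusC huplus
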